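/- For every integer m > 1 and every uniform attachment trajectory defined up to time n ≥ m+1 with degree cap d = 2m, there exists an admissible continuation G_{n+1}, …, G_{n+m+1} of the trajectory by m+1 steps such that in G_{n+m+1}: every vertex of {1,…,n} has degree exactly d, and each of the m+1 new vertices n+1, …, n+m+1 has degree exactly m with all of its neighbors lying in {1,…,n} (in particular, the open vertices of G_{n+m+1} are exactly n+1, …, n+m+1, and they are pairwise non-adjacent). -/

import Mathlib

open Finset MeasureTheory Filter Topology
open scoped ENNReal

noncomputable section

open scoped Classical

/-- The degree of vertex `v` in the graph `g`, counting neighbors among `{1, …, n}`. -/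
def degIn (g : SimpleGraph ℕ) (n v : ℕ) : ℕ :=
  ((Finset.Icc 1 n).filter fun u => g.Adj v u).card

/-- The set of neighbors of vertex `v` in the graph `g` among `{1, …, n}`. -/
def nbrsIn (g : SimpleGraph ℕ) (n v : ℕ) : Finset ℕ :=
  (Finset.Icc 1 n).filter fun u => g.Adj v u

/-- `g'` is obtained from `g` (a graph on `{1,…,n}`) by one admissible uniform-attachment
step with parameter `m` and degree cap `d = 2m`: the new vertex `n+1` is joined to `m`
distinct vertices of `{1,…,n}`, each of degree `< 2m` in `g`; adjacencies among the other
vertices are unchanged, and all edges of `g'` stay inside `{1,…,n+1}`. -/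
def IsUAStep (m n : ℕ) (g g' : SimpleGraph ℕ) : Prop :=
  (∀ u v, g'.Adj u v → u ∈ Finset.Icc 1 (n+1) ∧ v ∈ Finset.Icc 1 (n+1)) ∧
  (∀ u v, u ≠ n+1 → v ≠ n+1 → (g'.Adj u v ↔ g.Adj u v)) ∧
  (nbrsIn g' (n+1) (n+1)).card = m ∧
  (∀ u, g'.Adj (n+1) u → u ∈ Finset.Icc 1 n ∧ degIn g n u < 2*m)

/-- The complete graph on the vertex set `{1, …, k}` (as a graph on `ℕ`). -/
def completeOn (k : ℕ) : SimpleGraph ℕ :=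
  SimpleGraph.fromRel (fun u v => u ∈ Finset.Icc 1 k ∧ v ∈ Finset.Icc 1 k)

/-- A uniform attachment trajectory with parameter `m` (degree cap `d = 2m`):
`G (m+1)` is the complete graph on `{1,…,m+1}`, and for each `n ≥ m+1` the graph `G (n+1)`
is obtained from `G n` by an admissible uniform attachment step.
(The values `G k` for `k ≤ m` are irrelevant.) -/
structure UATraj (m : ℕ) where
  G : ℕ → SimpleGraph ℕ
  init : G (m+1) = completeOn (m+1)
  step : ∀ n, m+1 ≤ n → IsUAStep m n (G n) (G (n+1))

/-- A uniform attachment trajectory with parameter `m`, defined up to time `N`. -/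
structure UATrajUpTo (m N : ℕ) where
  G : ℕ → SimpleGraph ℕ
  init : G (m+1) = completeOn (m+1)
  step : ∀ n, m+1 ≤ n → n+1 ≤ N → IsUAStep m n (G n) (G (n+1))

/-- `g` (a graph of a trajectory at time `N`) is in a forest state over `{1,…,k}`:
every vertex of `{1,…,k}` has degree `2m`, and each of the vertices `k+1,…,N` has degree
`m` with all of its neighbors in `{1,…,k}`. -/
def ForestState (m k N : ℕ) (g : SimpleGraph ℕ) : Prop :=
  (∀ v ∈ Finset.Icc 1 k, degIn g N v = 2*m) ∧
  (∀ v ∈ Finset.Icc (k+1) N, degIn g N v = m ∧ nbrsIn g N v ⊆ Finset.Icc 1 k)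


/-! Along a trajectory the total deficit `∑ (2m - deg v)` of the present vertices stays
`m (m + 1)`: the initial clique has it, and each step adds a vertex of deficit `m` while lowering
the deficit of `m` old vertices by one. Every deficit is also at most `m`. Hence at time `n` the
deficits `f v ≤ m + 1` of the old vertices sum to `m (m + 1)`, and such a vector splits into
`m + 1` rounds of `m` distinct vertices: greedily, each round takes every vertex whose remaining
deficit equals the number of remaining rounds and fills up with vertices of positive deficit.
Joining the new vertex `n + j + 1` to the `j`-th round saturates every old vertex exactly and
leaves the new vertices with degree `m` and no edges among themselves. -/

theorem Finset.exists_subset_card_eq_of_sum_eq_mul {ι : Type*} {V : Finset ι} {f : ι → ℕ}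
    {m s : ℕ} (hf : ∀ v ∈ V, f v ≤ s + 1) (hsum : ∑ v ∈ V, f v = m * (s + 1)) :
    ∃ R ⊆ V, #R = m ∧ (∀ v ∈ R, 0 < f v) ∧ ∀ v ∈ V, v ∉ R → f v ≤ s := by
  set B := {v ∈ V | f v = s + 1}
  set P := {v ∈ V | 0 < f v}
  have hBP : B ⊆ P := monotone_filter_right V fun v hv => by omega
  have hB : #B * (s + 1) ≤ m * (s + 1) := calc
    #B * (s + 1) = ∑ v ∈ B, f v := by
      rw [sum_congr rfl fun v hv => (mem_filter.1 hv).2, sum_const, smul_eq_mul]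
    _ ≤ ∑ v ∈ V, f v := sum_le_sum_of_subset (filter_subset _ _)
    _ = m * (s + 1) := hsum
  have hP : m * (s + 1) ≤ #P * (s + 1) := calc
    m * (s + 1) = ∑ v ∈ P, f v := by rw [← hsum, sum_filter_of_ne fun v _ h => by omega]
    _ ≤ #P * (s + 1) := by
      simpa using sum_le_card_nsmul P f (s + 1) fun v hv => hf v (mem_filter.1 hv).1
  obtain ⟨R, hBR, hRP, hR⟩ := exists_subsuperset_card_eq hBP
    (Nat.le_of_mul_le_mul_right hB s.succ_pos) (Nat.le_of_mul_le_mul_right hP s.succ_pos)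
  refine ⟨R, hRP.trans (filter_subset _ _), hR, fun v hv => (mem_filter.1 (hRP hv)).2,
    fun v hv hvR => ?_⟩
  have : f v ≠ s + 1 := fun h => hvR (hBR (mem_filter.2 ⟨hv, h⟩))
  have := hf v hv
  omega

theorem Finset.exists_rounds_of_sum_eq_mul {ι : Type*} [DecidableEq ι] (V : Finset ι) (m : ℕ) :
    ∀ (s : ℕ) (f : ι → ℕ), (∀ v ∈ V, f v ≤ s) → ∑ v ∈ V, f v = m * s →
      ∃ S : ℕ → Finset ι, (∀ j, S j ⊆ V) ∧ (∀ j < s, #(S j) = m) ∧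
        ∀ v ∈ V, #{j ∈ range s | v ∈ S j} = f v
  | 0, f, hf, _ =>
    ⟨fun _ => ∅, fun _ => empty_subset V, by simp,
      fun v hv => by simpa using (Nat.le_zero.1 (hf v hv)).symm⟩
  | s + 1, f, hf, hsum => by
    obtain ⟨R, hRV, hR, hRpos, hRle⟩ := exists_subset_card_eq_of_sum_eq_mul hf hsum
    set f' : ι → ℕ := fun v => f v - if v ∈ R then 1 else 0
    have hf' : ∀ v ∈ V, f' v ≤ s := fun v hv => by
      by_cases hvR : v ∈ R
      · have := hf v hv; simp only [f', if_pos hvR]; omega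
      · simp only [f', if_neg hvR, Nat.sub_zero]; exact hRle v hv hvR
    have hsum' : ∑ v ∈ V, f' v = m * s := by
      have hsplit :
          ∑ v ∈ V, f' v + ∑ v ∈ V, (if v ∈ R then 1 else 0) = ∑ v ∈ V, f v := by
        rw [← sum_add_distrib]
        refine sum_congr rfl fun v _ => ?_
        by_cases hvR : v ∈ R
        · have := hRpos v hvR; simp only [f', if_pos hvR]; omega
        · simp [f', hvR]
      rw [sum_boole, filter_mem_eq_inter, inter_eq_right.2 hRV, hR, hsum, Nat.cast_id,
        Nat.mul_succ] at hsplit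
      omega
    obtain ⟨S, hSV, hS, hcount⟩ := exists_rounds_of_sum_eq_mul V m s f' hf' hsum'
    refine ⟨Function.update S s R, fun j => ?_, fun j hj => ?_, fun v hv => ?_⟩
    · rcases eq_or_ne j s with rfl | hjs
      · simpa using hRV
      · simpa [hjs] using hSV j
    · rcases eq_or_ne j s with rfl | hjs
      · simpa using hR
      · simpa [hjs] using hS j (by omega)
    · rw [range_add_one, filter_insert, Function.update_self,
        filter_congr fun j hj => by rw [Function.update_of_ne (mem_range.1 hj).ne]]
      have hcountv := hcount v hv
      by_cases hvR : v ∈ R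
      · have := hRpos v hvR
        simp only [f', if_pos hvR] at hcountv
        rw [if_pos hvR, card_insert_of_notMem (by simp), hcountv]
        omega
      · simpa [f', hvR] using hcountv

def EdgesWithin (k : ℕ) (g : SimpleGraph ℕ) : Prop :=
  ∀ u v, g.Adj u v → u ∈ Icc 1 k ∧ v ∈ Icc 1 k

lemma Icc_one_succ (k : ℕ) : Icc 1 (k + 1) = insert (k + 1) (Icc 1 k) :=
  (insert_Icc_right_eq_Icc_add_one (Nat.le_add_left 1 k)).symm

lemma degIn_succ {g g' : SimpleGraph ℕ} {k v : ℕ} (hv : v ∈ Icc 1 k)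
    (h : ∀ u, u ≠ k + 1 → (g'.Adj v u ↔ g.Adj v u)) :
    degIn g' (k + 1) v = degIn g k v + if g'.Adj (k + 1) v then 1 else 0 := by
  have hvk : v ≠ k + 1 := by have := (mem_Icc.1 hv).2; omega
  have hfilter : {u ∈ Icc 1 k | g'.Adj v u} = {u ∈ Icc 1 k | g.Adj v u} :=
    filter_congr fun u hu => h u (by have := (mem_Icc.1 hu).2; omega)
  unfold degIn
  rw [Icc_one_succ, filter_insert, hfilter]
  by_cases hadj : g'.Adj (k + 1) v
  · rw [if_pos hadj.symm, if_pos hadj, card_insert_of_notMem (by simp)]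
  · rw [if_neg fun h => hadj h.symm, if_neg hadj, Nat.add_zero]

lemma nbrsIn_succ_self (g : SimpleGraph ℕ) (k : ℕ) :
    nbrsIn g (k + 1) (k + 1) = nbrsIn g k (k + 1) := by
  unfold nbrsIn
  rw [Icc_one_succ, filter_insert, if_neg g.irrefl]

structure UAInvariant (m k : ℕ) (g : SimpleGraph ℕ) : Prop where
  edgesWithin : EdgesWithin k g
  le_degIn : ∀ v ∈ Icc 1 k, m ≤ degIn g k v
  degIn_le : ∀ v ∈ Icc 1 k, degIn g k v ≤ 2 * m
  sum_deficit : ∑ v ∈ Icc 1 k, (2 * m - degIn g k v) = m * (m + 1)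

lemma degIn_completeOn {k v : ℕ} (hv : v ∈ Icc 1 k) : degIn (completeOn k) k v = k - 1 := by
  have : {u ∈ Icc 1 k | (completeOn k).Adj v u} = (Icc 1 k).erase v := by
    ext u
    simp only [completeOn, SimpleGraph.fromRel_adj, mem_filter, mem_erase]
    constructor
    · rintro ⟨hu, hne, _⟩
      exact ⟨Ne.symm hne, hu⟩
    · rintro ⟨hne, hu⟩
      exact ⟨hu, Ne.symm hne, Or.inl ⟨hv, hu⟩⟩
  rw [degIn, this, card_erase_of_mem hv, Nat.card_Icc, Nat.add_sub_cancel]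

lemma uaInvariant_completeOn (m : ℕ) : UAInvariant m (m + 1) (completeOn (m + 1)) := by
  have hdeg : ∀ v ∈ Icc 1 (m + 1), degIn (completeOn (m + 1)) (m + 1) v = m := fun v hv => by
    rw [degIn_completeOn hv, Nat.add_sub_cancel]
  refine ⟨fun u v huv => ?_, fun v hv => (hdeg v hv).ge, fun v hv => by rw [hdeg v hv]; omega,
    ?_⟩
  · simp only [completeOn, SimpleGraph.fromRel_adj] at huv
    tauto
  · rw [sum_congr rfl fun v hv => by rw [hdeg v hv], sum_const, Nat.card_Icc, smul_eq_mul]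
    have : 2 * m - m = m := by omega
    rw [this, Nat.add_sub_cancel, mul_comm]

section IsUAStep

variable {m k : ℕ} {g g' : SimpleGraph ℕ}

lemma IsUAStep.degIn_succ (h : IsUAStep m k g g') {v : ℕ} (hv : v ∈ Icc 1 k) :
    degIn g' (k + 1) v = degIn g k v + if g'.Adj (k + 1) v then 1 else 0 :=
  _root_.degIn_succ hv fun u hu => h.2.1 v u (by have := (mem_Icc.1 hv).2; omega) hu

lemma IsUAStep.degIn_self (h : IsUAStep m k g g') : degIn g' (k + 1) (k + 1) = m :=
  h.2.2.1

lemma IsUAStep.sum_adj (h : IsUAStep m k g g') :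
    ∑ v ∈ Icc 1 k, (if g'.Adj (k + 1) v then 1 else 0) = m := by
  rw [sum_boole, ← h.2.2.1, nbrsIn_succ_self]
  rfl

lemma UAInvariant.of_isUAStep (hinv : UAInvariant m k g) (h : IsUAStep m k g g') :
    UAInvariant m (k + 1) g' := by
  have hlt : ∀ v, g'.Adj (k + 1) v → degIn g k v < 2 * m := fun v hv => (h.2.2.2 v hv).2
  have hbounds : ∀ v ∈ Icc 1 k, m ≤ degIn g' (k + 1) v ∧ degIn g' (k + 1) v ≤ 2 * m ∧
      2 * m - degIn g' (k + 1) v + (if g'.Adj (k + 1) v then 1 else 0) =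
        2 * m - degIn g k v := fun v hv => by
    have := hinv.le_degIn v hv
    have := hinv.degIn_le v hv
    rw [h.degIn_succ hv]
    by_cases hadj : g'.Adj (k + 1) v
    · have := hlt v hadj
      simp only [if_pos hadj]
      omega
    · simp only [if_neg hadj]
      omega
  refine ⟨h.1, fun v hv => ?_, fun v hv => ?_, ?_⟩
  · rcases mem_insert.1 (Icc_one_succ k ▸ hv) with rfl | hv
    · exact h.degIn_self.ge
    · exact (hbounds v hv).1
  · rcases mem_insert.1 (Icc_one_succ k ▸ hv) with rfl | hv
    · rw [h.degIn_self]; omega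
    · exact (hbounds v hv).2.1
  · have hold := sum_congr rfl fun v hv => (hbounds v hv).2.2
    rw [sum_add_distrib, h.sum_adj, hinv.sum_deficit] at hold
    rw [Icc_one_succ, sum_insert (by simp), h.degIn_self, Nat.mul_succ]
    rw [Nat.mul_succ] at hold
    omega

end IsUAStep

lemma UATrajUpTo.uaInvariant {m N : ℕ} (T : UATrajUpTo m N) {k : ℕ} (hk : m + 1 ≤ k)
    (hkN : k ≤ N) : UAInvariant m k (T.G k) := by
  induction k, hk using Nat.le_induction with
  | base => exact T.init ▸ uaInvariant_completeOn m
  | succ k hk ih => exact (ih (by omega)).of_isUAStep (T.step k hk hkN)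

def attachRounds (g : SimpleGraph ℕ) (n : ℕ) (S : ℕ → Finset ℕ) (j : ℕ) :
    SimpleGraph ℕ :=
  g ⊔ SimpleGraph.fromRel fun u v => ∃ i < j, u = n + i + 1 ∧ v ∈ S i

section attachRounds

variable {g : SimpleGraph ℕ} {n : ℕ} {S : ℕ → Finset ℕ}

@[simp]
lemma attachRounds_zero : attachRounds g n S 0 = g := by
  ext u v
  simp [attachRounds]

lemma attachRounds_succ_adj_iff {j u v : ℕ} (hu : u ≠ n + j + 1) (hv : v ≠ n + j + 1) :
    (attachRounds g n S (j + 1)).Adj u v ↔ (attachRounds g n S j).Adj u v := by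
  have hlt : ∀ w, w ≠ n + j + 1 → ∀ x,
      (∃ i < j + 1, w = n + i + 1 ∧ x ∈ S i) ↔ ∃ i < j, w = n + i + 1 ∧ x ∈ S i :=
    fun w hw x => ⟨fun ⟨i, hi, hwi, hx⟩ => ⟨i, by omega, hwi, hx⟩,
      fun ⟨i, hi, hwi, hx⟩ => ⟨i, by omega, hwi, hx⟩⟩
  simp only [attachRounds, SimpleGraph.sup_adj, SimpleGraph.fromRel_adj, hlt u hu, hlt v hv]

variable (hg : EdgesWithin n g) (hS : ∀ i, S i ⊆ Icc 1 n)
include hg hS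

lemma attachRounds_adj_new {i j u : ℕ} (hij : i < j) :
    (attachRounds g n S j).Adj (n + i + 1) u ↔ u ∈ S i := by
  have hout : ∀ i', n + i + 1 ∉ S i' := fun i' h => by have := (mem_Icc.1 (hS i' h)).2; omega
  simp only [attachRounds, SimpleGraph.sup_adj, SimpleGraph.fromRel_adj]
  constructor
  · rintro (h | ⟨_, ⟨i', _, hi', hu⟩ | ⟨i', _, _, hi'⟩⟩)
    · have := (mem_Icc.1 (hg _ _ h).1).2; omega
    · obtain rfl : i' = i := by omega
      exact hu
    · exact absurd hi' (hout i')
  · intro hu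
    exact Or.inr ⟨fun h => hout i (h ▸ hu), Or.inl ⟨i, hij, rfl, hu⟩⟩

lemma edgesWithin_attachRounds (j : ℕ) : EdgesWithin (n + j) (attachRounds g n S j) := by
  have hold : ∀ w ∈ Icc 1 n, w ∈ Icc 1 (n + j) := Icc_subset_Icc_right (by omega)
  have hnew : ∀ i < j, n + i + 1 ∈ Icc 1 (n + j) := fun i hi =>
    mem_Icc.2 ⟨by omega, by omega⟩
  intro u v huv
  simp only [attachRounds, SimpleGraph.sup_adj, SimpleGraph.fromRel_adj] at huv
  rcases huv with h | ⟨_, ⟨i, hi, rfl, hv⟩ | ⟨i, hi, rfl, hu⟩⟩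
  · exact ⟨hold u (hg u v h).1, hold v (hg u v h).2⟩
  · exact ⟨hnew i hi, hold v (hS i hv)⟩
  · exact ⟨hold u (hS i hu), hnew i hi⟩

lemma nbrsIn_attachRounds_new {i j : ℕ} (hij : i < j) :
    nbrsIn (attachRounds g n S j) (n + j) (n + i + 1) = S i := by
  ext u
  simp only [nbrsIn, mem_filter, attachRounds_adj_new hg hS hij]
  exact ⟨And.right, fun hu => ⟨Icc_subset_Icc_right (by omega) (hS i hu), hu⟩⟩

lemma degIn_attachRounds_old {v : ℕ} (hv : v ∈ Icc 1 n) (j : ℕ) :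
    degIn (attachRounds g n S j) (n + j) v = degIn g n v + #{i ∈ range j | v ∈ S i} := by
  have hvn := (mem_Icc.1 hv).2
  induction j with
  | zero => simp
  | succ j ih =>
    rw [← Nat.add_assoc, degIn_succ (Icc_subset_Icc_right (by omega) hv)
      fun u hu => attachRounds_succ_adj_iff (by omega) hu, ih,
      attachRounds_adj_new hg hS j.lt_succ_self, range_add_one, filter_insert]
    by_cases hvS : v ∈ S j
    · rw [if_pos hvS, if_pos hvS, card_insert_of_notMem (by simp), Nat.add_assoc]
    · rw [if_neg hvS, if_neg hvS, Nat.add_zero]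

lemma isUAStep_attachRounds {m j : ℕ} (hcard : #(S j) = m)
    (hdeg : ∀ v ∈ S j, degIn g n v + #{i ∈ range (j + 1) | v ∈ S i} ≤ 2 * m) :
    IsUAStep m (n + j) (attachRounds g n S j) (attachRounds g n S (j + 1)) := by
  refine ⟨edgesWithin_attachRounds hg hS (j + 1),
    fun u v hu hv => attachRounds_succ_adj_iff hu hv,
    (congrArg card (nbrsIn_attachRounds_new hg hS j.lt_succ_self)).trans hcard, fun u hu => ?_⟩
  rw [attachRounds_adj_new hg hS j.lt_succ_self] at hu
  have hun := hS j hu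
  refine ⟨Icc_subset_Icc_right (by omega) hun, ?_⟩
  have := hdeg u hu
  rw [range_add_one, filter_insert, if_pos hu, card_insert_of_notMem (by simp)] at this
  rw [degIn_attachRounds_old hg hS hun]
  omega

lemma forestState_attachRounds {m s : ℕ} (hcard : ∀ i < s, #(S i) = m)
    (hdeg : ∀ v ∈ Icc 1 n, degIn g n v + #{i ∈ range s | v ∈ S i} = 2 * m) :
    ForestState m n (n + s) (attachRounds g n S s) := by
  refine ⟨fun v hv => by rw [degIn_attachRounds_old hg hS hv, hdeg v hv], fun v hv => ?_⟩
  obtain ⟨i, rfl, hi⟩ : ∃ i, v = n + i + 1 ∧ i < s := by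
    have := mem_Icc.1 hv
    exact ⟨v - n - 1, by omega, by omega⟩
  have hnbrs := nbrsIn_attachRounds_new hg hS hi
  exact ⟨(congrArg card hnbrs).trans (hcard i hi), hnbrs ▸ hS i⟩

end attachRounds

def spliceAt {α : Type*} (G H : ℕ → α) (n k : ℕ) : α :=
  if k ≤ n then G k else H (k - n)

lemma spliceAt_of_le {α : Type*} {G H : ℕ → α} {n k : ℕ} (hk : k ≤ n) :
    spliceAt G H n k = G k :=
  if_pos hk

lemma spliceAt_add {α : Type*} {G H : ℕ → α} {n : ℕ} (h0 : H 0 = G n) :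
    ∀ j, spliceAt G H n (n + j) = H j
  | 0 => (if_pos le_rfl).trans h0.symm
  | j + 1 => (if_neg (by omega)).trans (congrArg H (Nat.add_sub_cancel_left n (j + 1)))

def UATrajUpTo.append {m n s : ℕ} (T : UATrajUpTo m n) (hn : m + 1 ≤ n)
    (H : ℕ → SimpleGraph ℕ) (h0 : H 0 = T.G n)
    (hH : ∀ j < s, IsUAStep m (n + j) (H j) (H (j + 1))) :
    UATrajUpTo m (n + s) where
  G := spliceAt T.G H n
  init := by rw [spliceAt_of_le hn, T.init]
  step k hk hks := by
    rcases le_or_gt (k + 1) n with hkn | hkn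
    · rw [spliceAt_of_le (by omega), spliceAt_of_le hkn]
      exact T.step k hk hkn
    · obtain ⟨j, rfl⟩ := Nat.exists_eq_add_of_le (Nat.lt_succ_iff.1 hkn)
      rw [spliceAt_add h0, Nat.add_assoc, spliceAt_add h0]
      exact hH j (by omega)

section ForestState

variable {m k N : ℕ} {g : SimpleGraph ℕ}

lemma ForestState.degIn_lt_iff (h : ForestState m k N g) (hm : 0 < m) {v : ℕ}
    (hv : v ∈ Icc 1 N) : degIn g N v < 2 * m ↔ v ∈ Icc (k + 1) N := by
  have hv := mem_Icc.1 hv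
  rcases le_or_gt v k with hvk | hvk
  · rw [h.1 v (mem_Icc.2 ⟨hv.1, hvk⟩), mem_Icc]
    omega
  · rw [(h.2 v (mem_Icc.2 ⟨hvk, hv.2⟩)).1, mem_Icc]
    omega

lemma ForestState.not_adj (h : ForestState m k N g) {u v : ℕ} (hu : u ∈ Icc (k + 1) N)
    (hv : v ∈ Icc (k + 1) N) : ¬ g.Adj u v := fun huv => by
  have hvN := mem_Icc.1 hv
  have := mem_Icc.1 ((h.2 u hu).2 (mem_filter.2 ⟨mem_Icc.2 ⟨by omega, hvN.2⟩, huv⟩))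
  omega

end ForestState

/-- For every integer `m > 1` and every uniform attachment trajectory defined
up to time `n ≥ m+1` with degree cap `d = 2m`, there is an admissible continuation by
`m+1` steps such that in `G (n+m+1)` every vertex of `{1,…,n}` has degree exactly `2m`,
and each of the `m+1` new vertices `n+1,…,n+m+1` has degree exactly `m` with all of its
neighbors lying in `{1,…,n}` (in particular, the open vertices of `G (n+m+1)` are exactly
`n+1,…,n+m+1`, and they are pairwise non-adjacent). -/
theorem uniform_attachment_forest_state_reachable (m : ℕ) (hm : 1 < m)
    (n : ℕ) (hn : m + 1 ≤ n) (T : UATrajUpTo m n) :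
    ∃ T' : UATrajUpTo m (n+m+1),
      (∀ k ≤ n, T'.G k = T.G k) ∧
      ForestState m n (n+m+1) (T'.G (n+m+1)) ∧
      (∀ v ∈ Finset.Icc 1 (n+m+1),
        degIn (T'.G (n+m+1)) (n+m+1) v < 2*m ↔ v ∈ Finset.Icc (n+1) (n+m+1)) ∧
      (∀ u ∈ Finset.Icc (n+1) (n+m+1), ∀ v ∈ Finset.Icc (n+1) (n+m+1),
        ¬ (T'.G (n+m+1)).Adj u v) := by
  have hinv := T.uaInvariant hn le_rfl
  obtain ⟨S, hSV, hScard, hScount⟩ := exists_rounds_of_sum_eq_mul (Icc 1 n) m (m + 1)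
    (fun v => 2 * m - degIn (T.G n) n v) (fun v hv => by have := hinv.le_degIn v hv; omega)
    hinv.sum_deficit
  have hfull : ∀ v ∈ Icc 1 n, degIn (T.G n) n v + #{i ∈ range (m + 1) | v ∈ S i} = 2 * m :=
    fun v hv => by rw [hScount v hv]; have := hinv.degIn_le v hv; omega
  have hstep : ∀ j < m + 1, IsUAStep m (n + j) (attachRounds (T.G n) n S j)
      (attachRounds (T.G n) n S (j + 1)) := fun j hj =>
    isUAStep_attachRounds hinv.edgesWithin hSV (hScard j hj) fun v hv =>
      hfull v (hSV j hv) ▸ Nat.add_le_add_left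
        (card_le_card (monotone_filter_left _ (range_subset_range.2 hj))) _
  let T' := T.append hn _ attachRounds_zero hstep
  have hT' : T'.G (n + m + 1) = attachRounds (T.G n) n S (m + 1) :=
    spliceAt_add attachRounds_zero (m + 1)
  have hforest : ForestState m n (n + m + 1) (T'.G (n + m + 1)) := by
    rw [hT']
    exact forestState_attachRounds hinv.edgesWithin hSV hScard hfull
  exact ⟨T', fun k hk => spliceAt_of_le hk, hforest,
    fun v hv => hforest.degIn_lt_iff (by omega) hv, fun u hu v hv => hforest.not_adj hu hv⟩
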